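/- Let π : E → E be a bijection with permutation matrix P, let σ : ℂ → ℂ be any function applied entrywise, and let Z_e ∈ ℂ^{E×a}, W_b ∈ ℂ^{a×c}, Z_i ∈ ℂ^{E×c}, W_a ∈ ℂ^{c×c}. Then σ( ((P·Z_i) · W_a) ⊙ abs((P·Z_e) · W_b) + P·Z_i ) = P · σ( (Z_i · W_a) ⊙ abs(Z_e · W_b) + Z_i ); that is, the invariant EIGN fusion operation is permutation equivariant. -/

import Mathlib

/-!
Left multiplication by the permutation matrix of `π` only reindexes rows (by `π⁻¹`). Right
multiplication by a weight matrix commutes with any reindexing of rows, and the Hadamard product,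
the entrywise absolute value, addition and `σ` act entrywise; so the whole fusion operation
commutes with reindexing rows, in particular with `P`.
-/

open Matrix

/-- The permutation matrix of a bijection `π : E ≃ E`:
`[P]_{e,e'} = 1` if `e = π e'` and `0` otherwise. -/
noncomputable def permMatrix {E : Type*} [DecidableEq E] (π : Equiv.Perm E) : Matrix E E ℂ :=
  Matrix.of fun e e' => if e = π e' then 1 else 0

/-- Entrywise complex absolute value of a matrix, viewed in `ℂ`. -/
noncomputable def absMat {m n : Type*} (M : Matrix m n ℂ) : Matrix m n ℂ :=
  M.map fun z => ((‖z‖ : ℝ) : ℂ)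

noncomputable def eignFusion {E a c : Type*} [Fintype a] [Fintype c] (σ : ℂ → ℂ)
    (Ze : Matrix E a ℂ) (Wb : Matrix a c ℂ) (Zi : Matrix E c ℂ) (Wa : Matrix c c ℂ) :
    Matrix E c ℂ :=
  (((Zi * Wa).hadamard (absMat (Ze * Wb))) + Zi).map σ

lemma permMatrix_eq_inv_permMatrix {E : Type*} [DecidableEq E] (π : Equiv.Perm E) :
    permMatrix π = π⁻¹.permMatrix ℂ := by
  ext e e'
  simp [permMatrix, PEquiv.toMatrix_apply, Equiv.eq_symm_apply, eq_comm]

lemma permMatrix_mul_eq_submatrix {E n : Type*} [Fintype E] [DecidableEq E]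
    (π : Equiv.Perm E) (M : Matrix E n ℂ) :
    permMatrix π * M = M.submatrix π.symm id := by
  rw [permMatrix_eq_inv_permMatrix, PEquiv.toMatrix_toPEquiv_mul]
  rfl

lemma submatrix_id_mul {l m n p α : Type*} [Fintype n] [Mul α] [AddCommMonoid α]
    (f : l → m) (M : Matrix m n α) (N : Matrix n p α) :
    M.submatrix f id * N = (M * N).submatrix f id := by
  rw [submatrix_mul M N f id id Function.bijective_id, submatrix_id_id]

lemma eignFusion_submatrix_rows {E E' a c : Type*} [Fintype a] [Fintype c] (f : E' → E)
    (σ : ℂ → ℂ) (Ze : Matrix E a ℂ) (Wb : Matrix a c ℂ) (Zi : Matrix E c ℂ) (Wa : Matrix c c ℂ) :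
    eignFusion σ (Ze.submatrix f id) Wb (Zi.submatrix f id) Wa
      = (eignFusion σ Ze Wb Zi Wa).submatrix f id := by
  rw [eignFusion, submatrix_id_mul, submatrix_id_mul]
  -- `⊙`, `absMat`, `+` and `map σ` act entrywise, so they commute with reindexing by definition.
  rfl

/-- The invariant EIGN fusion operation is permutation equivariant:
`σ(((P Z_i) W_a) ⊙ abs((P Z_e) W_b) + P Z_i) = P σ((Z_i W_a) ⊙ abs(Z_e W_b) + Z_i)`. -/
theorem eign_invariant_fusion_permutation_equivariant
    {E a c : Type*} [Fintype E] [DecidableEq E] [Fintype a] [Fintype c]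
    (π : Equiv.Perm E) (σ : ℂ → ℂ)
    (Ze : Matrix E a ℂ) (Wb : Matrix a c ℂ)
    (Zi : Matrix E c ℂ) (Wa : Matrix c c ℂ) :
    ((((permMatrix π * Zi) * Wa).hadamard (absMat ((permMatrix π * Ze) * Wb)))
        + permMatrix π * Zi).map σ
      = permMatrix π * ((((Zi * Wa).hadamard (absMat (Ze * Wb))) + Zi).map σ) := by
  simp only [permMatrix_mul_eq_submatrix]
  exact eignFusion_submatrix_rows π.symm σ Ze Wb Zi Wa
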